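/- For all natural numbers r ≥ 3 and d ≥ 1, the counts on one-column boards satisfy the recurrence D(r,1,d) = D(r−1,1,d) + D(r−3,1,d−1). (This recurrence is equivalent to the rational generating function Σ_{r,d} D(r,1,d) x^r y^d = (1+x²y)/(1−x−x³y).) -/
import Mathlib


/-- L1 (Manhattan) distance between two cells of the grid, via truncated
natural subtraction. -/
def cellDist (p q : ℕ × ℕ) : ℕ :=
  ((p.1 - q.1) + (q.1 - p.1)) + ((p.2 - q.2) + (q.2 - p.2))

/-- A domino on the `r × c` board: a 2-element set of cells of
`{0,…,r−1} × {0,…,c−1}` whose two cells are at L1-distance 1. -/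
def IsDomino (r c : ℕ) (dom : Finset (ℕ × ℕ)) : Prop :=
  dom.card = 2 ∧ (∀ p ∈ dom, p.1 < r ∧ p.2 < c) ∧
    ∀ p ∈ dom, ∀ q ∈ dom, p ≠ q → cellDist p q = 1

/-- Two dominoes are non-bonding if every cell of one is at L1-distance
at least 2 from every cell of the other. -/
def NonBonding (d₁ d₂ : Finset (ℕ × ℕ)) : Prop :=
  ∀ p ∈ d₁, ∀ q ∈ d₂, 2 ≤ cellDist p q

/-- `nbD r c d` is the number of `d`-element sets of pairwise non-bonding
dominoes on the `r × c` board. -/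
noncomputable def nbD (r c d : ℕ) : ℕ :=
  {S : Finset (Finset (ℕ × ℕ)) | S.card = d ∧ (∀ x ∈ S, IsDomino r c x) ∧
    ∀ x ∈ S, ∀ y ∈ S, x ≠ y → NonBonding x y}.ncard

lemma isDomino1_iff (r : ℕ) (x : Finset (ℕ × ℕ)) :
    IsDomino r 1 x ↔ ∃ a, a + 1 < r ∧ x = {(a,0),(a+1,0)} := by
  constructor
  · rintro ⟨h2, hb, hd⟩
    obtain ⟨p, q, hpq, rfl⟩ := Finset.card_eq_two.mp h2
    have hp := hb p (by simp)
    have hq := hb q (by simp)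
    have h1 := hd p (by simp) q (by simp) hpq
    simp [cellDist] at h1
    have hp2 : p.2 = 0 := by omega
    have hq2 : q.2 = 0 := by omega
    rcases (by omega : q.1 = p.1 + 1 ∨ p.1 = q.1 + 1) with h | h
    · exact ⟨p.1, by omega, by rw [show p = (p.1, 0) from Prod.ext rfl hp2,
        show q = (p.1+1, 0) from Prod.ext h hq2]⟩
    · exact ⟨q.1, by omega, by rw [Finset.pair_comm, show q = (q.1, 0) from Prod.ext rfl hq2,
        show p = (q.1+1, 0) from Prod.ext h hp2]⟩
  · rintro ⟨a, ha, rfl⟩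
    refine ⟨?_, ?_, ?_⟩
    · rw [Finset.card_insert_of_notMem (by simp), Finset.card_singleton]
    · intro p hp
      simp [Finset.mem_insert] at hp
      rcases hp with rfl | rfl <;> simp <;> omega
    · intro p hp q hq hne
      simp [Finset.mem_insert] at hp hq
      rcases hp with rfl | rfl <;> rcases hq with rfl | rfl <;>
        simp [cellDist] at hne ⊢

lemma nonBonding_pair (a b : ℕ) :
    NonBonding {(a,0),(a+1,0)} {(b,0),(b+1,0)} ↔ (a + 3 ≤ b ∨ b + 3 ≤ a) := by
  constructor
  · intro h
    have := h (a,0) (by simp) (b,0) (by simp)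
    have := h (a+1,0) (by simp) (b,0) (by simp)
    have := h (a,0) (by simp) (b+1,0) (by simp)
    have := h (a+1,0) (by simp) (b+1,0) (by simp)
    simp [cellDist] at *
    omega
  · intro h p hp q hq
    simp [Finset.mem_insert] at hp hq
    rcases hp with rfl | rfl <;> rcases hq with rfl | rfl <;> simp [cellDist] <;> omega

lemma A_finite (r c d : ℕ) :
    {S : Finset (Finset (ℕ × ℕ)) | S.card = d ∧ (∀ x ∈ S, IsDomino r c x) ∧
      ∀ x ∈ S, ∀ y ∈ S, x ≠ y → NonBonding x y}.Finite := by
  apply Set.Finite.subset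
    (Finset.finite_toSet ((Finset.range r ×ˢ Finset.range c).powerset.powerset))
  intro S hS
  simp only [Finset.coe_powerset, Set.mem_preimage, Set.mem_powerset_iff,
    Finset.coe_powerset] at *
  intro x hx
  have hd := hS.2.1 x hx
  simp only [Set.mem_preimage, Set.mem_powerset_iff]
  intro p hp
  have := hd.2.1 p hp
  simp [Finset.mem_product, Finset.mem_range]
  omega

theorem nbD_key (n e : ℕ) : nbD (n+3) 1 (e+1) = nbD (n+2) 1 (e+1) + nbD n 1 e := by
  set A : ℕ → ℕ → Set (Finset (Finset (ℕ × ℕ))) := fun r d =>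
    {S | S.card = d ∧ (∀ x ∈ S, IsDomino r 1 x) ∧
      ∀ x ∈ S, ∀ y ∈ S, x ≠ y → NonBonding x y} with hA
  have hnbD : ∀ r d, nbD r 1 d = (A r d).ncard := fun r d => rfl
  set T : Finset (ℕ × ℕ) := {(n+1,0),(n+2,0)} with hT
  set B : Set (Finset (Finset (ℕ × ℕ))) := A (n+3) (e+1) ∩ {S | T ∉ S} with hB
  set C : Set (Finset (Finset (ℕ × ℕ))) := A (n+3) (e+1) ∩ {S | T ∈ S} with hC
  have hsplit : A (n+3) (e+1) = B ∪ C := by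
    ext S
    simp only [hB, hC, Set.mem_union, Set.mem_inter_iff, Set.mem_setOf_eq]
    tauto
  have hdisj : Disjoint B C := by
    rw [Set.disjoint_iff]
    rintro S ⟨⟨_, h1⟩, ⟨_, h2⟩⟩
    exact (h1 h2).elim
  have hfin : (A (n+3) (e+1)).Finite := A_finite (n+3) 1 (e+1)
  have hBfin : B.Finite := hfin.subset Set.inter_subset_left
  have hCfin : C.Finite := hfin.subset Set.inter_subset_left
  -- B equals the (n+2)-board set
  have hBeq : B = A (n+2) (e+1) := by
    ext S
    simp only [hB, hA, Set.mem_inter_iff, Set.mem_setOf_eq]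
    constructor
    · rintro ⟨⟨hcard, hdom, hnb⟩, hTnot⟩
      refine ⟨hcard, ?_, hnb⟩
      intro x hx
      obtain ⟨a, ha, rfl⟩ := (isDomino1_iff (n+3) x).mp (hdom x hx)
      rw [isDomino1_iff]
      refine ⟨a, ?_, rfl⟩
      rcases (by omega : a + 1 < n + 2 ∨ a = n + 1) with h | rfl
      · exact h
      · exact absurd hx hTnot
    · rintro ⟨hcard, hdom, hnb⟩
      refine ⟨⟨hcard, ?_, hnb⟩, ?_⟩
      · intro x hx
        obtain ⟨a, ha, rfl⟩ := (isDomino1_iff (n+2) x).mp (hdom x hx)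
        exact (isDomino1_iff (n+3) _).mpr ⟨a, by omega, rfl⟩
      · intro hTS
        have := ((hdom T hTS).2.1 (n+2,0) (by simp [hT])).1
        omega
  -- C is in bijection with the n-board set via erasing T
  have hCeq : (fun S => S.erase T) '' C = A n e := by
    ext S'
    simp only [Set.mem_image, hC, hA, Set.mem_inter_iff, Set.mem_setOf_eq]
    constructor
    · rintro ⟨S, ⟨⟨hcard, hdom, hnb⟩, hTS⟩, rfl⟩
      refine ⟨?_, ?_, ?_⟩
      · rw [Finset.card_erase_of_mem hTS, hcard]; omega
      · intro x hx
        have hxS := Finset.mem_of_mem_erase hx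
        have hxT := Finset.ne_of_mem_erase hx
        obtain ⟨a, ha, rfl⟩ := (isDomino1_iff (n+3) x).mp (hdom x hxS)
        have := (nonBonding_pair a (n+1)).mp (hnb _ hxS T hTS hxT)
        exact (isDomino1_iff n _).mpr ⟨a, by omega, rfl⟩
      · intro x hx y hy hxy
        exact hnb x (Finset.mem_of_mem_erase hx) y (Finset.mem_of_mem_erase hy) hxy
    · rintro ⟨hcard, hdom, hnb⟩
      have hTnot : T ∉ S' := by
        intro hTS
        have := ((hdom T hTS).2.1 (n+2,0) (by simp [hT])).1
        omega
      refine ⟨insert T S', ⟨⟨?_, ?_, ?_⟩, Finset.mem_insert_self T S'⟩,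
        Finset.erase_insert hTnot⟩
      · rw [Finset.card_insert_of_notMem hTnot, hcard]
      · intro x hx
        rcases Finset.mem_insert.mp hx with rfl | hx'
        · exact (isDomino1_iff (n+3) _).mpr ⟨n+1, by omega, rfl⟩
        · obtain ⟨a, ha, rfl⟩ := (isDomino1_iff n x).mp (hdom x hx')
          exact (isDomino1_iff (n+3) _).mpr ⟨a, by omega, rfl⟩
      · intro x hx y hy hxy
        have key : ∀ z ∈ S', NonBonding T z ∧ NonBonding z T := by
          intro z hz
          obtain ⟨a, ha, rfl⟩ := (isDomino1_iff n z).mp (hdom z hz)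
          exact ⟨(nonBonding_pair (n+1) a).mpr (by omega),
            (nonBonding_pair a (n+1)).mpr (by omega)⟩
        rcases Finset.mem_insert.mp hx with rfl | hx' <;>
          rcases Finset.mem_insert.mp hy with rfl | hy'
        · exact absurd rfl hxy
        · exact (key y hy').1
        · exact (key x hx').2
        · exact hnb x hx' y hy' hxy
  have hinj : Set.InjOn (fun S => S.erase T) C := by
    rintro S1 ⟨_, h1⟩ S2 ⟨_, h2⟩ h
    simp only at h
    rw [← Finset.insert_erase h1, ← Finset.insert_erase h2, h]
  calc nbD (n+3) 1 (e+1) = (B ∪ C).ncard := by rw [hnbD, hsplit]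
    _ = B.ncard + C.ncard := Set.ncard_union_eq hdisj hBfin hCfin
    _ = nbD (n+2) 1 (e+1) + nbD n 1 e := by
        rw [hnbD, hnbD, hBeq, ← hCeq, Set.ncard_image_of_injOn hinj]

theorem nbD_col1_rec (r d : ℕ) (hr : 3 ≤ r) (hd : 1 ≤ d) :
    nbD r 1 d = nbD (r - 1) 1 d + nbD (r - 3) 1 (d - 1) := by
  obtain ⟨n, rfl⟩ : ∃ n, r = n + 3 := ⟨r - 3, by omega⟩
  obtain ⟨e, rfl⟩ : ∃ e, d = e + 1 := ⟨d - 1, by omega⟩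
  simpa using nbD_key n e
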